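/- Let T > 0, t ∈ [0,T), 0 < h ≤ k, and define Ṽ(t,x) := Φ((h+k−x+(T−t))/√(T−t)) − Φ((k−x+(T−t))/√(T−t)) − Φ((h−x+(T−t))/√(T−t)) + Φ((−x+(T−t))/√(T−t)). Then ∫_ℝ (∂_x Ṽ(t,x))² dx ≤ (8/√(2(T−t))) φ(0). -/

import Mathlib

open Real MeasureTheory

noncomputable def stdGaussianPDF (x : ℝ) : ℝ := (Real.sqrt (2 * π))⁻¹ * Real.exp (-x ^ 2 / 2)

noncomputable def stdGaussianCDF (x : ℝ) : ℝ := ∫ u in Set.Iic x, stdGaussianPDF u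

lemma stdGaussianPDF_nonneg (x : ℝ) : 0 ≤ stdGaussianPDF x := by
  unfold stdGaussianPDF; positivity

lemma integrable_stdGaussianPDF : Integrable stdGaussianPDF := by
  have : Integrable (fun x : ℝ => (Real.sqrt (2 * π))⁻¹ * Real.exp (-(1/2) * x ^ 2)) :=
    (integrable_exp_neg_mul_sq (by norm_num)).const_mul _
  refine this.congr (Filter.Eventually.of_forall fun x => ?_)
  unfold stdGaussianPDF; ring_nf

lemma continuous_stdGaussianPDF : Continuous stdGaussianPDF := by
  unfold stdGaussianPDF; continuity

lemma hasDerivAt_stdGaussianCDF (y : ℝ) : HasDerivAt stdGaussianCDF (stdGaussianPDF y) y := by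
  have heq : stdGaussianCDF = fun y => stdGaussianCDF 0 + ∫ u in (0:ℝ)..y, stdGaussianPDF u := by
    funext y
    unfold stdGaussianCDF
    rw [← intervalIntegral.integral_Iic_sub_Iic integrable_stdGaussianPDF.integrableOn
      integrable_stdGaussianPDF.integrableOn]
    ring
  rw [heq]
  exact (intervalIntegral.integral_hasDerivAt_right
    integrable_stdGaussianPDF.intervalIntegrable
    (continuous_stdGaussianPDF.stronglyMeasurableAtFilter _ _)
    continuous_stdGaussianPDF.continuousAt).const_add _

lemma gaussPDF_mul {s : ℝ} (hs : 0 < s) (a b x : ℝ) :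
    stdGaussianPDF ((a - x) / Real.sqrt s) * stdGaussianPDF ((b - x) / Real.sqrt s)
      = (2 * π)⁻¹ * Real.exp (-(a - b) ^ 2 / (4 * s)) *
        Real.exp (-s⁻¹ * (x - (a + b) / 2) ^ 2) := by
  unfold stdGaussianPDF
  have h2π : Real.sqrt (2 * π) * Real.sqrt (2 * π) = 2 * π :=
    Real.mul_self_sqrt (by positivity)
  have hss : Real.sqrt s ^ 2 = s := Real.sq_sqrt hs.le
  rw [mul_mul_mul_comm, ← Real.exp_add, mul_assoc ((2 * π)⁻¹ : ℝ), ← Real.exp_add,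
    ← mul_inv, h2π]
  congr 1
  rw [div_pow, div_pow, hss]
  field_simp
  ring

lemma integrable_gaussPDF_mul {s : ℝ} (hs : 0 < s) (a b : ℝ) :
    Integrable (fun x => stdGaussianPDF ((a - x) / Real.sqrt s) *
      stdGaussianPDF ((b - x) / Real.sqrt s)) := by
  have : Integrable (fun x : ℝ => (2 * π)⁻¹ * Real.exp (-(a - b) ^ 2 / (4 * s)) *
      Real.exp (-s⁻¹ * (x - (a + b) / 2) ^ 2)) :=
    (((integrable_exp_neg_mul_sq (by positivity : (0:ℝ) < s⁻¹)).comp_sub_right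
      ((a + b) / 2)).const_mul _)
  exact this.congr (Filter.Eventually.of_forall fun x => (gaussPDF_mul hs a b x).symm)

lemma gaussPDF_mul_integral_le {s : ℝ} (hs : 0 < s) (a b : ℝ) :
    (∫ x : ℝ, stdGaussianPDF ((a - x) / Real.sqrt s) *
      stdGaussianPDF ((b - x) / Real.sqrt s)) ≤ Real.sqrt s / (2 * Real.sqrt π) := by
  have hmaj : Integrable (fun x : ℝ => (2 * π)⁻¹ * Real.exp (-s⁻¹ * (x - (a + b) / 2) ^ 2)) :=
    (((integrable_exp_neg_mul_sq (by positivity : (0:ℝ) < s⁻¹)).comp_sub_right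
      ((a + b) / 2)).const_mul _)
  have hle : (∫ x : ℝ, stdGaussianPDF ((a - x) / Real.sqrt s) *
      stdGaussianPDF ((b - x) / Real.sqrt s))
      ≤ ∫ x : ℝ, (2 * π)⁻¹ * Real.exp (-s⁻¹ * (x - (a + b) / 2) ^ 2) := by
    refine integral_mono (integrable_gaussPDF_mul hs a b) hmaj fun x => ?_
    rw [gaussPDF_mul hs a b x]
    have h1 : Real.exp (-(a - b) ^ 2 / (4 * s)) ≤ 1 := by
      rw [Real.exp_le_one_iff, neg_div]
      have : 0 ≤ (a - b) ^ 2 / (4 * s) := by positivity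
      linarith
    have h2 : (0:ℝ) < (2 * π)⁻¹ := by positivity
    have := mul_le_mul_of_nonneg_right (mul_le_mul_of_nonneg_left h1 h2.le)
      (Real.exp_pos (-s⁻¹ * (x - (a + b) / 2) ^ 2)).le
    simpa using this
  refine hle.trans_eq ?_
  rw [integral_const_mul]
  have : (∫ x : ℝ, Real.exp (-s⁻¹ * (x - (a + b) / 2) ^ 2))
      = ∫ x : ℝ, Real.exp (-s⁻¹ * x ^ 2) :=
    integral_sub_right_eq_self (fun x : ℝ => Real.exp (-s⁻¹ * x ^ 2)) _
  rw [this, integral_gaussian]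
  rw [show π / s⁻¹ = π * s by field_simp, Real.sqrt_mul pi_pos.le]
  have hπ : Real.sqrt π > 0 := Real.sqrt_pos.mpr pi_pos
  field_simp
  rw [Real.sq_sqrt pi_pos.le]

lemma integrable_sq_add {s : ℝ} (hs : 0 < s) (a b : ℝ) :
    Integrable (fun x => (stdGaussianPDF ((a - x) / Real.sqrt s)
      + stdGaussianPDF ((b - x) / Real.sqrt s)) ^ 2) := by
  have H := ((integrable_gaussPDF_mul hs a a).add (integrable_gaussPDF_mul hs a b)).add
    ((integrable_gaussPDF_mul hs b a).add (integrable_gaussPDF_mul hs b b))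
  exact H.congr (Filter.Eventually.of_forall fun x => by simp only [Pi.add_apply]; ring)

lemma sq_add_integral_le {s : ℝ} (hs : 0 < s) (a b : ℝ) :
    (∫ x : ℝ, (stdGaussianPDF ((a - x) / Real.sqrt s)
      + stdGaussianPDF ((b - x) / Real.sqrt s)) ^ 2)
      ≤ 4 * (Real.sqrt s / (2 * Real.sqrt π)) := by
  have hrw : (fun x : ℝ => (stdGaussianPDF ((a - x) / Real.sqrt s)
      + stdGaussianPDF ((b - x) / Real.sqrt s)) ^ 2)
      = fun x : ℝ => (stdGaussianPDF ((a - x) / Real.sqrt s) * stdGaussianPDF ((a - x) / Real.sqrt s)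
        + stdGaussianPDF ((a - x) / Real.sqrt s) * stdGaussianPDF ((b - x) / Real.sqrt s))
        + (stdGaussianPDF ((b - x) / Real.sqrt s) * stdGaussianPDF ((a - x) / Real.sqrt s)
        + stdGaussianPDF ((b - x) / Real.sqrt s) * stdGaussianPDF ((b - x) / Real.sqrt s)) :=
    funext fun x => by ring
  have I1 : Integrable (fun x : ℝ => stdGaussianPDF ((a - x) / Real.sqrt s) * stdGaussianPDF ((a - x) / Real.sqrt s)
      + stdGaussianPDF ((a - x) / Real.sqrt s) * stdGaussianPDF ((b - x) / Real.sqrt s)) := by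
    exact (integrable_gaussPDF_mul hs a a).add (integrable_gaussPDF_mul hs a b)
  have I2 : Integrable (fun x : ℝ => stdGaussianPDF ((b - x) / Real.sqrt s) * stdGaussianPDF ((a - x) / Real.sqrt s)
      + stdGaussianPDF ((b - x) / Real.sqrt s) * stdGaussianPDF ((b - x) / Real.sqrt s)) := by
    exact (integrable_gaussPDF_mul hs b a).add (integrable_gaussPDF_mul hs b b)
  rw [hrw, integral_add I1 I2,
    integral_add (integrable_gaussPDF_mul hs a a) (integrable_gaussPDF_mul hs a b),
    integral_add (integrable_gaussPDF_mul hs b a) (integrable_gaussPDF_mul hs b b)]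
  have h1 := gaussPDF_mul_integral_le hs a a
  have h2 := gaussPDF_mul_integral_le hs a b
  have h3 := gaussPDF_mul_integral_le hs b a
  have h4 := gaussPDF_mul_integral_le hs b b
  linarith

lemma deriv_alg {u s : ℝ} (hu : u ≠ 0) (hus : u ^ 2 = s) (A B C D : ℝ) :
    (A * (-1 / u) - B * (-1 / u) - C * (-1 / u) + D * (-1 / u)) ^ 2
      = (B + C - (A + D)) ^ 2 / s := by
  subst hus; field_simp; ring

lemma final_arith {u2 us upi s : ℝ} (h2 : u2 ^ 2 = 2) (hs : us ^ 2 = s)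
    (hu2 : 0 < u2) (hus : 0 < us) (hupi : 0 < upi) :
    8 * (us / (2 * upi)) / s = 8 / (u2 * us) * (u2 * upi)⁻¹ := by
  rw [← h2, ← hs]; field_simp

/-- L² bound on the space derivative of the value function Ṽ. -/
theorem Vtilde_deriv_L2_bound (T t h k : ℝ) (hT : 0 < T) (ht : t ∈ Set.Ico 0 T)
    (hh : 0 < h) (hk : h ≤ k) :
    (∫ x : ℝ, (deriv (fun x : ℝ =>
        stdGaussianCDF ((h + k - x + (T - t)) / Real.sqrt (T - t))
        - stdGaussianCDF ((k - x + (T - t)) / Real.sqrt (T - t))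
        - stdGaussianCDF ((h - x + (T - t)) / Real.sqrt (T - t))
        + stdGaussianCDF ((-x + (T - t)) / Real.sqrt (T - t))) x) ^ 2)
      ≤ (8 / Real.sqrt (2 * (T - t))) * stdGaussianPDF 0 := by
  set s : ℝ := T - t with hsdef
  have hs : 0 < s := sub_pos.mpr ht.2
  have hσ : 0 < Real.sqrt s := Real.sqrt_pos.mpr hs
  set P : ℝ → ℝ := fun x => stdGaussianPDF ((k + s - x) / Real.sqrt s)
    + stdGaussianPDF ((h + s - x) / Real.sqrt s) with hPdef
  set Q : ℝ → ℝ := fun x => stdGaussianPDF ((h + k + s - x) / Real.sqrt s)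
    + stdGaussianPDF ((s - x) / Real.sqrt s) with hQdef
  -- derivative computation
  have hin : ∀ (c x : ℝ), HasDerivAt (fun y : ℝ => (c - y + s) / Real.sqrt s)
      (-1 / Real.sqrt s) x := by
    intro c x
    have h1 : HasDerivAt (fun y : ℝ => c - y + s) (-1) x := by
      simpa using ((hasDerivAt_id x).const_sub c).add_const s
    simpa using h1.div_const (Real.sqrt s)
  have hin4 : ∀ x : ℝ, HasDerivAt (fun y : ℝ => (-y + s) / Real.sqrt s)
      (-1 / Real.sqrt s) x := by
    intro x
    have h1 : HasDerivAt (fun y : ℝ => -y + s) (-1) x := by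
      simpa using ((hasDerivAt_id x).neg).add_const s
    simpa using h1.div_const (Real.sqrt s)
  have hF : ∀ x : ℝ, HasDerivAt (fun x : ℝ =>
        stdGaussianCDF ((h + k - x + s) / Real.sqrt s)
        - stdGaussianCDF ((k - x + s) / Real.sqrt s)
        - stdGaussianCDF ((h - x + s) / Real.sqrt s)
        + stdGaussianCDF ((-x + s) / Real.sqrt s))
      ((stdGaussianPDF ((h + k - x + s) / Real.sqrt s) * (-1 / Real.sqrt s)
        - stdGaussianPDF ((k - x + s) / Real.sqrt s) * (-1 / Real.sqrt s)
        - stdGaussianPDF ((h - x + s) / Real.sqrt s) * (-1 / Real.sqrt s))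
        + stdGaussianPDF ((-x + s) / Real.sqrt s) * (-1 / Real.sqrt s)) x := by
    intro x
    exact ((((hasDerivAt_stdGaussianCDF _).comp x (hin (h + k) x)).sub
      ((hasDerivAt_stdGaussianCDF _).comp x (hin k x))).sub
      ((hasDerivAt_stdGaussianCDF _).comp x (hin h x))).add
      ((hasDerivAt_stdGaussianCDF _).comp x (hin4 x))
  have hrw : (fun x : ℝ => (deriv (fun x : ℝ =>
        stdGaussianCDF ((h + k - x + s) / Real.sqrt s)
        - stdGaussianCDF ((k - x + s) / Real.sqrt s)
        - stdGaussianCDF ((h - x + s) / Real.sqrt s)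
        + stdGaussianCDF ((-x + s) / Real.sqrt s)) x) ^ 2)
      = fun x : ℝ => (P x - Q x) ^ 2 / s := by
    funext x
    rw [(hF x).deriv]
    simp only [hPdef, hQdef,
      show h + k - x + s = h + k + s - x from by ring,
      show k - x + s = k + s - x from by ring,
      show h - x + s = h + s - x from by ring,
      show -x + s = s - x from by ring]
    exact deriv_alg hσ.ne' (Real.sq_sqrt hs.le) _ _ _ _
  rw [hrw, integral_div]
  -- integrability facts
  have hPP : Integrable (fun x => P x ^ 2) := by
    exact integrable_sq_add hs (k + s) (h + s)
  have hQQ : Integrable (fun x => Q x ^ 2) := by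
    exact integrable_sq_add hs (h + k + s) s
  have key : (∫ x : ℝ, (P x - Q x) ^ 2) ≤ 8 * (Real.sqrt s / (2 * Real.sqrt π)) := by
    have hmono : (∫ x : ℝ, (P x - Q x) ^ 2) ≤ ∫ x : ℝ, (P x ^ 2 + Q x ^ 2) := by
      refine integral_mono_of_nonneg (Filter.Eventually.of_forall fun x => sq_nonneg _)
        (hPP.add hQQ) (Filter.Eventually.of_forall fun x => ?_)
      have h1 : 0 ≤ P x := add_nonneg (stdGaussianPDF_nonneg _) (stdGaussianPDF_nonneg _)
      have h2 : 0 ≤ Q x := add_nonneg (stdGaussianPDF_nonneg _) (stdGaussianPDF_nonneg _)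
      dsimp only
      nlinarith [mul_nonneg h1 h2]
    rw [integral_add hPP hQQ] at hmono
    have b1 : (∫ x : ℝ, P x ^ 2) ≤ 4 * (Real.sqrt s / (2 * Real.sqrt π)) := by
      exact sq_add_integral_le hs (k + s) (h + s)
    have b2 : (∫ x : ℝ, Q x ^ 2) ≤ 4 * (Real.sqrt s / (2 * Real.sqrt π)) := by
      exact sq_add_integral_le hs (h + k + s) s
    linarith
  calc (∫ x : ℝ, (P x - Q x) ^ 2) / s ≤ (8 * (Real.sqrt s / (2 * Real.sqrt π))) / s := by
        gcongr
    _ = 8 / Real.sqrt (2 * s) * stdGaussianPDF 0 := by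
        rw [show stdGaussianPDF 0 = (Real.sqrt (2 * π))⁻¹ from by
            unfold stdGaussianPDF; norm_num,
          Real.sqrt_mul (by norm_num : (0:ℝ) ≤ 2) s,
          Real.sqrt_mul (by norm_num : (0:ℝ) ≤ 2) π]
        exact final_arith (Real.sq_sqrt (by norm_num)) (Real.sq_sqrt hs.le)
          (Real.sqrt_pos.mpr (by norm_num)) hσ (Real.sqrt_pos.mpr pi_pos)
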